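/- Let A ∈ ℝ^{n×n} be invertible, b ∈ ℝ^n nonzero, and 1 ≤ r, s ≤ ∞. Consider the problem f(A,b) = A⁻¹b with componentwise input error RelError_Cw((Ã,b̃),(A,b)) = max{ ‖Ã − A‖_{rs}/‖A‖_{rs}, ‖b̃ − b‖_s/‖b‖_s } and normwise output error ‖Ã⁻¹b̃ − A⁻¹b‖_r/‖A⁻¹b‖_r. Then the mixed condition number M^f(A,b), defined as the limit as δ → 0⁺ of the supremum over invertible Ã and b̃ with 0 < RelError_Cw((Ã,b̃),(A,b)) ≤ δ of the ratio of output to input error, equals κ_{rs}(A) + ‖A⁻¹‖_{sr}‖b‖_s/‖A⁻¹b‖_r, where κ_{rs}(A) = ‖A‖_{rs}‖A⁻¹‖_{sr}. -/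

import Mathlib

open scoped ENNReal
open MeasureTheory ProbabilityTheory Filter Topology

/-- The ℓ^p norm on ℝ^n. -/
noncomputable def lpNorm {n : ℕ} (p : ℝ≥0∞) (x : Fin n → ℝ) : ℝ :=
  ‖(WithLp.toLp p x : PiLp p (fun _ : Fin n => ℝ))‖

/-- The operator norm ‖B‖_{rs} = sup_{x ≠ 0} ‖Bx‖_s / ‖x‖_r of a matrix
B : ℝ^{n×m}, where the domain ℝ^m carries the ℓ^r norm and the codomain ℝ^n
carries the ℓ^s norm. -/
noncomputable def opNorm {n m : ℕ} (r s : ℝ≥0∞) (B : Matrix (Fin n) (Fin m) ℝ) : ℝ :=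
  sSup {c : ℝ | ∃ x : Fin m → ℝ, x ≠ 0 ∧ c = lpNorm s (B.mulVec x) / lpNorm r x}

/-!
Write `x = A⁻¹ b`. If `(C, b')` has componentwise relative error `ε ≤ δ`, then
`C⁻¹ b' - x = C⁻¹ ((b' - b) - (C - A) x)`, and the identity `C⁻¹ = A⁻¹ - C⁻¹ (C - A) A⁻¹`
gives `‖C⁻¹‖ ≤ ‖A⁻¹‖ / (1 - δ κ(A))`; hence every ratio is at most
`‖A⁻¹‖ (‖b‖ + ‖A‖ ‖x‖) / ‖x‖ / (1 - δ κ(A))`.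

Conversely, take `w` with `‖w‖_s = 1` and `‖A⁻¹ w‖_r = ‖A⁻¹‖_{sr}`, a norming functional `g`
of `x`, and the rank one matrix `M = w gᵀ`. The perturbation `(C, b') = (A - δ ‖A‖ M, b + δ ‖b‖ w)`
has relative error exactly `δ` and `(b' - b) - (C - A) x = δ (‖b‖ + ‖A‖ ‖x‖) w`, so its ratio is
`(‖b‖ + ‖A‖ ‖x‖) / ‖x‖ · ‖C⁻¹ w‖`. Both bounds tend to `‖A⁻¹‖ (‖b‖ + ‖A‖ ‖x‖) / ‖x‖`.
-/

open WithLp (toLp ofLp)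
open scoped Matrix

noncomputable def Matrix.toLpCLM {n m : ℕ} (r s : ℝ≥0∞) [Fact (1 ≤ r)] [Fact (1 ≤ s)] :
    Matrix (Fin n) (Fin m) ℝ ≃ₗ[ℝ]
      (PiLp r (fun _ : Fin m => ℝ) →L[ℝ] PiLp s (fun _ : Fin n => ℝ)) :=
  (Matrix.toLpLin r s).trans LinearMap.toContinuousLinearMap

lemma ContinuousLinearMap.exists_norm_eq_one_norm_apply_eq {E F : Type*}
    [NormedAddCommGroup E] [NormedSpace ℝ E] [FiniteDimensional ℝ E] [Nontrivial E]
    [NormedAddCommGroup F] [NormedSpace ℝ F] (f : E →L[ℝ] F) :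
    ∃ w : E, ‖w‖ = 1 ∧ ‖f w‖ = ‖f‖ := by
  have hmem := ((isCompact_sphere (0 : E) 1).image
    (by fun_prop : Continuous fun x => ‖f x‖)).sSup_mem
      ((NormedSpace.sphere_nonempty.2 zero_le_one).image _)
  rw [f.sSup_sphere_eq_norm] at hmem
  obtain ⟨w, hw, hfw⟩ := hmem
  exact ⟨w, mem_sphere_zero_iff_norm.1 hw, hfw⟩

section OperatorNorm

variable {n m k : ℕ} {r s t : ℝ≥0∞} [Fact (1 ≤ r)] [Fact (1 ≤ s)] [Fact (1 ≤ t)]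

lemma Matrix.toLpCLM_toLp (B : Matrix (Fin n) (Fin m) ℝ) (x : Fin m → ℝ) :
    B.toLpCLM r s (toLp r x) = toLp s (B *ᵥ x) := rfl

lemma Matrix.toLpCLM_mul (r : ℝ≥0∞) [Fact (1 ≤ r)] (B : Matrix (Fin n) (Fin m) ℝ)
    (C : Matrix (Fin m) (Fin k) ℝ) :
    (B * C).toLpCLM t s = (B.toLpCLM r s).comp (C.toLpCLM t r) :=
  ContinuousLinearMap.ext fun x => by
    simp [Matrix.toLpCLM, Matrix.toLpLin_apply, Matrix.mulVec_mulVec]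

lemma lpNorm_pos {x : Fin n → ℝ} (hx : x ≠ 0) : 0 < lpNorm r x :=
  norm_pos_iff.2 ((WithLp.toLp_eq_zero r).not.2 hx)

lemma lpNorm_smul (c : ℝ) (x : Fin n → ℝ) : lpNorm r (c • x) = |c| * lpNorm r x := by
  change ‖toLp r (c • x)‖ = _
  rw [WithLp.toLp_smul, norm_smul, Real.norm_eq_abs]
  rfl

lemma continuous_lpNorm : Continuous (lpNorm (n := n) r) :=
  continuous_norm.comp (PiLp.continuous_toLp r _)

lemma opNorm_eq_norm_toLpCLM (B : Matrix (Fin n) (Fin m) ℝ) :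
    opNorm r s B = ‖B.toLpCLM r s‖ := by
  rw [← ContinuousLinearMap.sSup_sphere_eq_norm]
  refine congrArg sSup (Set.ext fun c => ⟨?_, ?_⟩)
  · rintro ⟨x, hx, rfl⟩
    refine ⟨(lpNorm r x)⁻¹ • toLp r x, ?_, ?_⟩
    · rw [mem_sphere_zero_iff_norm, norm_smul, norm_inv, Real.norm_eq_abs,
        abs_of_pos (lpNorm_pos hx)]
      exact inv_mul_cancel₀ (lpNorm_pos hx).ne'
    · simp only [map_smul, norm_smul, norm_inv, Real.norm_eq_abs, abs_of_pos (lpNorm_pos hx)]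
      rw [div_eq_inv_mul]; rfl
  · rintro ⟨y, hy, rfl⟩
    rw [mem_sphere_zero_iff_norm] at hy
    refine ⟨ofLp y, fun h => by simp [(WithLp.ofLp_eq_zero r).1 h] at hy, ?_⟩
    change _ = ‖toLp s (B *ᵥ ofLp y)‖ / ‖toLp r (ofLp y)‖
    rw [WithLp.toLp_ofLp, hy, div_one]
    rfl

lemma opNorm_nonneg (B : Matrix (Fin n) (Fin m) ℝ) : 0 ≤ opNorm r s B := by
  rw [opNorm_eq_norm_toLpCLM]; exact norm_nonneg _

lemma lpNorm_mulVec_le (B : Matrix (Fin n) (Fin m) ℝ) (x : Fin m → ℝ) :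
    lpNorm s (B *ᵥ x) ≤ opNorm r s B * lpNorm r x := by
  rw [opNorm_eq_norm_toLpCLM]; exact (B.toLpCLM r s).le_opNorm (toLp r x)

lemma opNorm_pos_of_mulVec_ne_zero {B : Matrix (Fin n) (Fin m) ℝ} {x : Fin m → ℝ}
    (hBx : B *ᵥ x ≠ 0) : 0 < opNorm r s B := by
  refine (opNorm_nonneg B).lt_of_ne fun h0 => hBx ?_
  have h := lpNorm_mulVec_le (r := r) (s := s) B x
  rw [← h0, zero_mul] at h
  exact (WithLp.toLp_eq_zero s).1 (norm_le_zero_iff.1 h)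

lemma opNorm_mul_le (B : Matrix (Fin n) (Fin m) ℝ) (C : Matrix (Fin m) (Fin k) ℝ) :
    opNorm t s (B * C) ≤ opNorm r s B * opNorm t r C := by
  simp only [opNorm_eq_norm_toLpCLM, Matrix.toLpCLM_mul r]
  exact ContinuousLinearMap.opNorm_comp_le _ _

lemma opNorm_sub_le (B C : Matrix (Fin n) (Fin m) ℝ) :
    opNorm r s (B - C) ≤ opNorm r s B + opNorm r s C := by
  simp only [opNorm_eq_norm_toLpCLM, map_sub]
  exact norm_sub_le _ _

lemma opNorm_smul (c : ℝ) (B : Matrix (Fin n) (Fin m) ℝ) :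
    opNorm r s (c • B) = |c| * opNorm r s B := by
  simp only [opNorm_eq_norm_toLpCLM, map_smul, norm_smul, Real.norm_eq_abs]

end OperatorNorm

lemma Matrix.inv_eq_inv_sub_inv_mul_sub_mul_inv {ι R : Type*} [Fintype ι] [DecidableEq ι]
    [CommRing R] {A C : Matrix ι ι R} (hA : IsUnit A.det) (hC : IsUnit C.det) :
    C⁻¹ = A⁻¹ - C⁻¹ * (C - A) * A⁻¹ := by
  rw [Matrix.mul_sub, Matrix.sub_mul, Matrix.nonsing_inv_mul _ hC, Matrix.mul_assoc,
    Matrix.mul_nonsing_inv _ hA, Matrix.one_mul, Matrix.mul_one, sub_sub_cancel]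

lemma Matrix.mulVec_nonsing_inv_mulVec {ι R : Type*} [Fintype ι] [DecidableEq ι] [CommRing R]
    {A : Matrix ι ι R} (hA : IsUnit A.det) (v : ι → R) : A *ᵥ (A⁻¹ *ᵥ v) = v := by
  rw [Matrix.mulVec_mulVec, Matrix.mul_nonsing_inv _ hA, Matrix.one_mulVec]

lemma Matrix.nonsing_inv_mulVec_ne_zero {ι R : Type*} [Fintype ι] [DecidableEq ι] [CommRing R]
    {A : Matrix ι ι R} (hA : IsUnit A.det) {v : ι → R} (hv : v ≠ 0) : A⁻¹ *ᵥ v ≠ 0 :=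
  fun h => hv (by rw [← Matrix.mulVec_nonsing_inv_mulVec hA v, h, Matrix.mulVec_zero])

section Perturbation

variable {n m : ℕ} {r s : ℝ≥0∞} [Fact (1 ≤ r)] [Fact (1 ≤ s)]

lemma exists_lpNorm_eq_one_lpNorm_mulVec_eq_opNorm [NeZero m]
    (B : Matrix (Fin n) (Fin m) ℝ) :
    ∃ w : Fin m → ℝ, lpNorm r w = 1 ∧ lpNorm s (B *ᵥ w) = opNorm r s B := by
  obtain ⟨w, hw, hBw⟩ := (B.toLpCLM r s).exists_norm_eq_one_norm_apply_eq
  exact ⟨ofLp w, hw, by rw [opNorm_eq_norm_toLpCLM, ← hBw]; rfl⟩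

lemma exists_opNorm_eq_one_mulVec_eq {x : Fin m → ℝ} (hx : x ≠ 0) {w : Fin n → ℝ}
    (hw : lpNorm s w = 1) :
    ∃ M : Matrix (Fin n) (Fin m) ℝ, opNorm r s M = 1 ∧ M *ᵥ x = lpNorm r x • w := by
  obtain ⟨g, hg, hgx⟩ := exists_dual_vector ℝ (toLp r x) (lpNorm_pos hx).ne'
  refine ⟨(Matrix.toLpCLM r s).symm (g.smulRight (toLp s w)), ?_, ?_⟩
  · rw [opNorm_eq_norm_toLpCLM, LinearEquiv.apply_symm_apply, g.norm_smulRight_apply, hg,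
      one_mul]
    exact hw
  · apply WithLp.toLp_injective s
    rw [← Matrix.toLpCLM_toLp (r := r), LinearEquiv.apply_symm_apply,
      ContinuousLinearMap.smulRight_apply, hgx, WithLp.toLp_smul]
    rfl

lemma opNorm_inv_le {A C : Matrix (Fin n) (Fin n) ℝ} (hA : IsUnit A.det) (hC : IsUnit C.det)
    {η : ℝ} (hCA : opNorm r s (C - A) ≤ η) (hη : η * opNorm s r A⁻¹ < 1) :
    opNorm s r C⁻¹ ≤ opNorm s r A⁻¹ / (1 - η * opNorm s r A⁻¹) := by
  rw [le_div_iff₀ (sub_pos.2 hη)]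
  have hC0 := opNorm_nonneg (r := s) (s := r) C⁻¹
  have hA0 := opNorm_nonneg (r := s) (s := r) A⁻¹
  have h : opNorm s r C⁻¹ ≤ opNorm s r A⁻¹ + opNorm s r C⁻¹ * η * opNorm s r A⁻¹ :=
    calc opNorm s r C⁻¹ = opNorm s r (A⁻¹ - C⁻¹ * (C - A) * A⁻¹) :=
          congrArg _ (Matrix.inv_eq_inv_sub_inv_mul_sub_mul_inv hA hC)
      _ ≤ opNorm s r A⁻¹ + opNorm s r C⁻¹ * opNorm r s (C - A) * opNorm s r A⁻¹ :=
          (opNorm_sub_le _ _).trans (add_le_add le_rfl ((opNorm_mul_le (r := r) _ _).trans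
            (mul_le_mul_of_nonneg_right (opNorm_mul_le (r := s) _ _) hA0)))
      _ ≤ opNorm s r A⁻¹ + opNorm s r C⁻¹ * η * opNorm s r A⁻¹ := by gcongr
  linarith

lemma lpNorm_inv_mulVec_sub_le {A C : Matrix (Fin n) (Fin n) ℝ} (hC : IsUnit C.det)
    {x b : Fin n → ℝ} (hAx : A *ᵥ x = b) (b' : Fin n → ℝ) :
    lpNorm r (C⁻¹ *ᵥ b' - x) ≤
      opNorm s r C⁻¹ * (lpNorm s (b' - b) + opNorm r s (C - A) * lpNorm r x) := by
  have hsub : C⁻¹ *ᵥ b' - x = C⁻¹ *ᵥ ((b' - b) - (C - A) *ᵥ x) := by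
    rw [Matrix.sub_mulVec, hAx, Matrix.mulVec_sub, Matrix.mulVec_sub, Matrix.mulVec_sub,
      Matrix.mulVec_mulVec, Matrix.nonsing_inv_mul _ hC, Matrix.one_mulVec]
    abel
  rw [hsub]
  refine (lpNorm_mulVec_le (r := s) _ _).trans (mul_le_mul_of_nonneg_left ?_ (opNorm_nonneg _))
  change ‖toLp s (b' - b - (C - A) *ᵥ x)‖ ≤ _
  rw [WithLp.toLp_sub]
  exact (norm_sub_le _ _).trans (add_le_add le_rfl (lpNorm_mulVec_le _ _))

end Perturbation

lemma Filter.Tendsto.eventually_isUnit_det {α ι R : Type*} [Fintype ι] [DecidableEq ι]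
    [NormedCommRing R] [CompleteSpace R] {l : Filter α} {B : α → Matrix ι ι R}
    {A : Matrix ι ι R} (hB : Tendsto B l (𝓝 A)) (hA : IsUnit A.det) :
    ∀ᶠ i in l, IsUnit (B i).det :=
  (continuous_id.matrix_det.tendsto A).comp hB (Units.isOpen.mem_nhds hA)

lemma Filter.Tendsto.lpNorm_inv_mulVec {α : Type*} {n : ℕ} {r : ℝ≥0∞} [Fact (1 ≤ r)]
    {l : Filter α} {B : α → Matrix (Fin n) (Fin n) ℝ} {A : Matrix (Fin n) (Fin n) ℝ}
    (hB : Tendsto B l (𝓝 A)) (hA : IsUnit A.det) (w : Fin n → ℝ) :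
    Tendsto (fun i => lpNorm r ((B i)⁻¹ *ᵥ w)) l (𝓝 (lpNorm r (A⁻¹ *ᵥ w))) :=
  ((continuous_lpNorm.comp (continuous_id.matrix_mulVec continuous_const)).tendsto A⁻¹).comp
    ((continuousAt_matrix_inv A (NormedRing.inverse_continuousAt hA.unit)).tendsto.comp hB)

lemma tendsto_csSup_of_mem_of_forall_le {α : Type*} {l : Filter α} {S : α → Set ℝ}
    {lo up : α → ℝ} {L : ℝ} (hlo : Tendsto lo l (𝓝 L)) (hup : Tendsto up l (𝓝 L))
    (hmem : ∀ᶠ i in l, lo i ∈ S i) (hle : ∀ᶠ i in l, ∀ c ∈ S i, c ≤ up i) :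
    Tendsto (fun i => sSup (S i)) l (𝓝 L) :=
  tendsto_of_tendsto_of_tendsto_of_le_of_le' hlo hup
    ((hmem.and hle).mono fun i h => le_csSup ⟨up i, h.2⟩ h.1)
    ((hmem.and hle).mono fun i h => csSup_le ⟨lo i, h.1⟩ h.2)

section MixedCondition

variable {n : ℕ} (r s : ℝ≥0∞)

noncomputable def relInputError (A : Matrix (Fin n) (Fin n) ℝ) (b : Fin n → ℝ)
    (B : Matrix (Fin n) (Fin n) ℝ) (b' : Fin n → ℝ) : ℝ :=
  max (opNorm r s (B - A) / opNorm r s A) (lpNorm s (b' - b) / lpNorm s b)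

noncomputable def relOutputError (A : Matrix (Fin n) (Fin n) ℝ) (b : Fin n → ℝ)
    (B : Matrix (Fin n) (Fin n) ℝ) (b' : Fin n → ℝ) : ℝ :=
  lpNorm r (B⁻¹ *ᵥ b' - A⁻¹ *ᵥ b) / lpNorm r (A⁻¹ *ᵥ b)

def mixedCondRatios (A : Matrix (Fin n) (Fin n) ℝ) (b : Fin n → ℝ) (δ : ℝ) : Set ℝ :=
  {c | ∃ (B : Matrix (Fin n) (Fin n) ℝ) (b' : Fin n → ℝ), IsUnit B.det ∧
    0 < relInputError r s A b B b' ∧ relInputError r s A b B b' ≤ δ ∧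
    c = relOutputError r A b B b' / relInputError r s A b B b'}

variable {r s} [Fact (1 ≤ r)] [Fact (1 ≤ s)] {A : Matrix (Fin n) (Fin n) ℝ} {b : Fin n → ℝ}

lemma le_of_mem_mixedCondRatios (hA : IsUnit A.det) (ha : 0 < opNorm r s A)
    (hb : 0 < lpNorm s b) {δ c : ℝ} (hδ : δ * opNorm r s A * opNorm s r A⁻¹ < 1)
    (hc : c ∈ mixedCondRatios r s A b δ) :
    c ≤ opNorm s r A⁻¹ / (1 - δ * opNorm r s A * opNorm s r A⁻¹) *
      ((lpNorm s b + opNorm r s A * lpNorm r (A⁻¹ *ᵥ b)) / lpNorm r (A⁻¹ *ᵥ b)) := by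
  obtain ⟨C, b', hC, hε, hεδ, rfl⟩ := hc
  set ε := relInputError r s A b C b'
  set x := A⁻¹ *ᵥ b
  have hAx : A *ᵥ x = b := Matrix.mulVec_nonsing_inv_mulVec hA b
  have hCA : opNorm r s (C - A) ≤ ε * opNorm r s A := (div_le_iff₀ ha).1 (le_max_left _ _)
  have hb' : lpNorm s (b' - b) ≤ ε * lpNorm s b := (div_le_iff₀ hb).1 (le_max_right _ _)
  have hCinv : opNorm s r C⁻¹ ≤ opNorm s r A⁻¹ / (1 - δ * opNorm r s A * opNorm s r A⁻¹) :=
    opNorm_inv_le hA hC (hCA.trans (mul_le_mul_of_nonneg_right hεδ ha.le)) hδ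
  have hx0 : 0 ≤ lpNorm r x := norm_nonneg _
  have hK : 0 ≤ (lpNorm s b + opNorm r s A * lpNorm r x) / lpNorm r x :=
    div_nonneg (add_nonneg hb.le (mul_nonneg ha.le hx0)) hx0
  have hnum : lpNorm r (C⁻¹ *ᵥ b' - x) ≤
      ε * (opNorm s r C⁻¹ * (lpNorm s b + opNorm r s A * lpNorm r x)) :=
    calc lpNorm r (C⁻¹ *ᵥ b' - x)
        ≤ opNorm s r C⁻¹ * (lpNorm s (b' - b) + opNorm r s (C - A) * lpNorm r x) :=
          lpNorm_inv_mulVec_sub_le hC hAx b'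
      _ ≤ opNorm s r C⁻¹ * (ε * lpNorm s b + ε * opNorm r s A * lpNorm r x) := by
          have := opNorm_nonneg (r := s) (s := r) C⁻¹
          gcongr
      _ = ε * (opNorm s r C⁻¹ * (lpNorm s b + opNorm r s A * lpNorm r x)) := by ring
  calc relOutputError r A b C b' / ε
      ≤ opNorm s r C⁻¹ * ((lpNorm s b + opNorm r s A * lpNorm r x) / lpNorm r x) := by
        rw [div_le_iff₀ hε, relOutputError]
        calc lpNorm r (C⁻¹ *ᵥ b' - x) / lpNorm r x
            ≤ ε * (opNorm s r C⁻¹ * (lpNorm s b + opNorm r s A * lpNorm r x)) / lpNorm r x :=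
              div_le_div_of_nonneg_right hnum hx0
          _ = _ := by ring
    _ ≤ _ := mul_le_mul_of_nonneg_right hCinv hK

lemma inv_mulVec_sub_eq_smul {B : Matrix (Fin n) (Fin n) ℝ} (hB : IsUnit B.det)
    {x w b' : Fin n → ℝ} {c : ℝ} (h : b' = B *ᵥ x + c • w) :
    B⁻¹ *ᵥ b' - x = c • (B⁻¹ *ᵥ w) := by
  rw [h, Matrix.mulVec_add, Matrix.mulVec_mulVec, Matrix.nonsing_inv_mul _ hB,
    Matrix.one_mulVec, Matrix.mulVec_smul, add_sub_cancel_left]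

variable {M : Matrix (Fin n) (Fin n) ℝ} {w : Fin n → ℝ}

lemma relInputError_sub_smul_add_smul (hM : opNorm r s M = 1) (hw : lpNorm s w = 1)
    (ha : 0 < opNorm r s A) (hb : 0 < lpNorm s b) {δ : ℝ} (hδ : 0 ≤ δ) :
    relInputError r s A b (A - (δ * opNorm r s A) • M) (b + (δ * lpNorm s b) • w) = δ := by
  rw [relInputError, sub_sub_cancel_left, ← neg_smul, opNorm_smul, hM, add_sub_cancel_left,
    lpNorm_smul, hw, abs_neg, abs_of_nonneg (mul_nonneg hδ ha.le),
    abs_of_nonneg (mul_nonneg hδ hb.le), mul_one, mul_one, mul_div_cancel_right₀ _ ha.ne',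
    mul_div_cancel_right₀ _ hb.ne', max_self]

lemma relOutputError_sub_smul_add_smul (hA : IsUnit A.det)
    (hMx : M *ᵥ (A⁻¹ *ᵥ b) = lpNorm r (A⁻¹ *ᵥ b) • w) {δ : ℝ} (hδ : 0 ≤ δ)
    (hdet : IsUnit (A - (δ * opNorm r s A) • M).det) :
    relOutputError r A b (A - (δ * opNorm r s A) • M) (b + (δ * lpNorm s b) • w) =
      δ * ((lpNorm s b + opNorm r s A * lpNorm r (A⁻¹ *ᵥ b)) / lpNorm r (A⁻¹ *ᵥ b) *
        lpNorm r ((A - (δ * opNorm r s A) • M)⁻¹ *ᵥ w)) := by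
  set x := A⁻¹ *ᵥ b
  have hAx : A *ᵥ x = b := Matrix.mulVec_nonsing_inv_mulVec hA b
  have hb' : b + (δ * lpNorm s b) • w = (A - (δ * opNorm r s A) • M) *ᵥ x +
      (δ * (lpNorm s b + opNorm r s A * lpNorm r x)) • w := by
    rw [Matrix.sub_mulVec, Matrix.smul_mulVec, hAx, hMx]
    module
  have hS : 0 ≤ lpNorm s b + opNorm r s A * lpNorm r x :=
    add_nonneg (norm_nonneg _) (mul_nonneg (opNorm_nonneg A) (norm_nonneg _))
  rw [relOutputError, inv_mulVec_sub_eq_smul hdet hb', lpNorm_smul,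
    abs_of_nonneg (mul_nonneg hδ hS)]
  ring

lemma mem_mixedCondRatios_sub_smul_add_smul (hA : IsUnit A.det)
    (hM : opNorm r s M = 1) (hw : lpNorm s w = 1)
    (hMx : M *ᵥ (A⁻¹ *ᵥ b) = lpNorm r (A⁻¹ *ᵥ b) • w) (ha : 0 < opNorm r s A)
    (hb : 0 < lpNorm s b) {δ : ℝ} (hδ : 0 < δ) (hdet : IsUnit (A - (δ * opNorm r s A) • M).det) :
    (lpNorm s b + opNorm r s A * lpNorm r (A⁻¹ *ᵥ b)) / lpNorm r (A⁻¹ *ᵥ b) *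
      lpNorm r ((A - (δ * opNorm r s A) • M)⁻¹ *ᵥ w) ∈ mixedCondRatios r s A b δ := by
  have hin := relInputError_sub_smul_add_smul hM hw ha hb hδ.le
  refine ⟨_, _, hdet, hin.symm ▸ hδ, hin.le, ?_⟩
  rw [hin, relOutputError_sub_smul_add_smul hA hMx hδ.le hdet, mul_div_cancel_left₀ _ hδ.ne']

lemma tendsto_sSup_mixedCondRatios (hA : IsUnit A.det) (hb : b ≠ 0) :
    Tendsto (fun δ => sSup (mixedCondRatios r s A b δ)) (𝓝[>] 0)
      (𝓝 (opNorm s r A⁻¹ *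
        ((lpNorm s b + opNorm r s A * lpNorm r (A⁻¹ *ᵥ b)) / lpNorm r (A⁻¹ *ᵥ b)))) := by
  have : NeZero n := ⟨by rintro rfl; exact hb (Subsingleton.elim _ _)⟩
  have hx := Matrix.nonsing_inv_mulVec_ne_zero hA hb
  have ha : 0 < opNorm r s A :=
    opNorm_pos_of_mulVec_ne_zero ((Matrix.mulVec_nonsing_inv_mulVec hA b).symm ▸ hb)
  obtain ⟨w, hw, hAw⟩ := exists_lpNorm_eq_one_lpNorm_mulVec_eq_opNorm (r := s) (s := r) A⁻¹
  obtain ⟨M, hM, hMx⟩ := exists_opNorm_eq_one_mulVec_eq (r := r) (s := s) hx hw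
  set K := (lpNorm s b + opNorm r s A * lpNorm r (A⁻¹ *ᵥ b)) / lpNorm r (A⁻¹ *ᵥ b)
  have hid : Tendsto (fun δ : ℝ => δ) (𝓝[>] 0) (𝓝 0) :=
    tendsto_nhdsWithin_of_tendsto_nhds tendsto_id
  have hB : Tendsto (fun δ : ℝ => A - (δ * opNorm r s A) • M) (𝓝[>] 0) (𝓝 A) := by
    simpa using tendsto_const_nhds (x := A).sub ((hid.mul_const (opNorm r s A)).smul_const M)
  have hκ : Tendsto (fun δ : ℝ => δ * opNorm r s A * opNorm s r A⁻¹) (𝓝[>] 0) (𝓝 0) := by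
    simpa using (hid.mul_const (opNorm r s A)).mul_const (opNorm s r A⁻¹)
  have hup : Tendsto (fun δ : ℝ => opNorm s r A⁻¹ / (1 - δ * opNorm r s A * opNorm s r A⁻¹) * K)
      (𝓝[>] 0) (𝓝 (opNorm s r A⁻¹ * K)) := by
    simpa using ((tendsto_const_nhds (x := opNorm s r A⁻¹)).div
      ((tendsto_const_nhds (x := (1 : ℝ))).sub hκ) (by norm_num)).mul_const K
  refine tendsto_csSup_of_mem_of_forall_le
    (mul_comm K _ ▸ hAw ▸ (hB.lpNorm_inv_mulVec hA w).const_mul K) hup ?_ ?_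
  · filter_upwards [self_mem_nhdsWithin, hB.eventually_isUnit_det hA] with δ hδ hdet
    exact mem_mixedCondRatios_sub_smul_add_smul hA hM hw hMx ha (lpNorm_pos hb) hδ hdet
  · filter_upwards [hκ.eventually_lt_const one_pos] with δ hδ
    exact fun c hc => le_of_mem_mixedCondRatios hA ha (lpNorm_pos hb) hδ hc

end MixedCondition

/-- Theorem 4.1: the mixed condition number of the problem f(A,b) = A⁻¹b, with
componentwise relative input error max{‖Ã − A‖_{rs}/‖A‖_{rs}, ‖b̃ − b‖_s/‖b‖_s}
and normwise relative output error ‖Ã⁻¹b̃ − A⁻¹b‖_r/‖A⁻¹b‖_r, equals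
κ_{rs}(A) + ‖A⁻¹‖_{sr}‖b‖_s/‖A⁻¹b‖_r where κ_{rs}(A) = ‖A‖_{rs}‖A⁻¹‖_{sr}. -/
theorem tendsto_mixed_cond_linear_system (n : ℕ) (r s : ℝ≥0∞) (hr : 1 ≤ r) (hs : 1 ≤ s)
    (A : Matrix (Fin n) (Fin n) ℝ) (hA : IsUnit A.det)
    (b : Fin n → ℝ) (hb : b ≠ 0) :
    Tendsto
      (fun δ : ℝ => sSup {c : ℝ | ∃ (B : Matrix (Fin n) (Fin n) ℝ) (b' : Fin n → ℝ),
        IsUnit B.det ∧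
        0 < max (opNorm r s (B - A) / opNorm r s A) (lpNorm s (b' - b) / lpNorm s b) ∧
        max (opNorm r s (B - A) / opNorm r s A) (lpNorm s (b' - b) / lpNorm s b) ≤ δ ∧
        c = (lpNorm r (B⁻¹.mulVec b' - A⁻¹.mulVec b) / lpNorm r (A⁻¹.mulVec b)) /
            max (opNorm r s (B - A) / opNorm r s A) (lpNorm s (b' - b) / lpNorm s b)})
      (𝓝[>] (0 : ℝ))
      (𝓝 (opNorm r s A * opNorm s r A⁻¹ +
            opNorm s r A⁻¹ * lpNorm s b / lpNorm r (A⁻¹.mulVec b))) := by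
  have : Fact (1 ≤ r) := ⟨hr⟩
  have : Fact (1 ≤ s) := ⟨hs⟩
  have hx : lpNorm r (A⁻¹ *ᵥ b) ≠ 0 := (lpNorm_pos (Matrix.nonsing_inv_mulVec_ne_zero hA hb)).ne'
  have hlim : opNorm r s A * opNorm s r A⁻¹ + opNorm s r A⁻¹ * lpNorm s b / lpNorm r (A⁻¹ *ᵥ b) =
      opNorm s r A⁻¹ *
        ((lpNorm s b + opNorm r s A * lpNorm r (A⁻¹ *ᵥ b)) / lpNorm r (A⁻¹ *ᵥ b)) := by
    field_simp
    ring
  rw [hlim]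
  exact tendsto_sSup_mixedCondRatios hA hb
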